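/- arXiv:1307.7932 — 2 statements merged into one kernel-verified Lean document; each statement's English description precedes it below -/
import Mathlib

section
/- Let X₁, X₂, … be a sequence of real-valued random variables. Assume there exist constants A > 0 and a > 0 and a sequence of non-decreasing non-negative functions {g_n}_{n≥1} on (0,∞) such that for all t > 0 and n ≥ 1, g_n(t) ≤ g_{n+1}(t), and for every 0 < ρ < 1, lim_{n→∞} inf{ t²/(g_n(t)·log t) : t > 0, g_n(t) > ρn } = ∞ (where the infimum of the empty set is defined to be ∞), and such that for all integers m ≥ 0, n ≥ 1 and all t ≥ 0, P{|S(m+1, m+n)| > t} ≤ A·exp{ −a t² / (n + g_n(t)) }. Then for every 0 < c < a there exists a constant C > 0 (depending only on A, a and {g_n}) such that for all n ≥ 1, m ≥ 0 and t ≥ 0, P{M(m+1, m+n) > t} ≤ C·exp{ −c t² / (n + g_n(t)) }. -/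
/-!
Strong induction on the block length `n`. Write `φ = t² / (n + gₙ(t))`. If `φ ≤ L` the bound
is trivial once `C ≥ exp (c L)`. Otherwise the union bound over the `n` partial sums gives
`n A exp (-a φ)`, which suffices when `log n ≤ (a - c) φ` or when `n` is below a fixed threshold.
In the remaining case the growth condition on `g` forces `gₙ(t) ≤ δ² n / 8`, and the block is
split after `k ≈ (1 - δ²/2) n` terms: `M(m+1, m+n) > t` implies `M(m+1, m+k) > t`,
`|S(m+1, m+k)| > (1 - δ) t` or `M(m+k+1, m+n) > δ t`. Both maxima have exponent at least
`(1 + δ²/4) φ`, so for `L` large the induction hypothesis bounds each by `C exp (-c φ) / 4`, while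
the middle event costs `A exp (-c φ)` because `a (1 - δ)² ≥ c`; this closes the induction for
`C ≥ 2 A`.
-/

open MeasureTheory Real

namespace MaximalBernstein

variable {Ω : Type*}

/-- `partialSum X m j = S(m+1, m+j)`. -/
def partialSum (X : ℕ → Ω → ℝ) (m j : ℕ) (ω : Ω) : ℝ :=
  ∑ i ∈ Finset.Icc (m + 1) (m + j), X i ω

/-- `maxAbsPartialSum X m n hn = M(m+1, m+n)`. -/
def maxAbsPartialSum (X : ℕ → Ω → ℝ) (m n : ℕ) (hn : 1 ≤ n) (ω : Ω) : ℝ :=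
  (Finset.Icc 1 n).sup' (Finset.nonempty_Icc.mpr hn) fun j => |partialSum X m j ω|

lemma partialSum_add (X : ℕ → Ω → ℝ) (m k j : ℕ) (ω : Ω) :
    partialSum X m (k + j) ω = partialSum X m k ω + partialSum X (m + k) j ω := by
  simp only [partialSum, Finset.Icc_add_one_left_eq_Ioc, ← add_assoc]
  exact (Finset.sum_Ioc_consecutive _ (by omega) (by omega)).symm

lemma lt_maxAbsPartialSum_iff {X : ℕ → Ω → ℝ} {m n : ℕ} {hn : 1 ≤ n} {t : ℝ} {ω : Ω} :
    t < maxAbsPartialSum X m n hn ω ↔ ∃ j ∈ Finset.Icc 1 n, t < |partialSum X m j ω| :=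
  Finset.lt_sup'_iff ..

lemma setOf_lt_maxAbsPartialSum_subset (X : ℕ → Ω → ℝ) (m : ℕ) {k j n : ℕ} (hk : 1 ≤ k)
    (hj : 1 ≤ j) (hkjn : k + j = n) (hn : 1 ≤ n) {t u v : ℝ} (huv : u + v ≤ t) :
    {ω | t < maxAbsPartialSum X m n hn ω} ⊆
      {ω | t < maxAbsPartialSum X m k hk ω} ∪ {ω | u < |partialSum X m k ω|} ∪
        {ω | v < maxAbsPartialSum X (m + k) j hj ω} := by
  intro ω hω
  obtain ⟨i, hi, hit⟩ := lt_maxAbsPartialSum_iff.mp hω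
  rw [Finset.mem_Icc] at hi
  by_cases hik : i ≤ k
  · exact .inl (.inl (lt_maxAbsPartialSum_iff.mpr ⟨i, Finset.mem_Icc.mpr ⟨hi.1, hik⟩, hit⟩))
  by_cases hu : u < |partialSum X m k ω|
  · exact .inl (.inr hu)
  refine .inr (lt_maxAbsPartialSum_iff.mpr ⟨i - k, Finset.mem_Icc.mpr ⟨by omega, by omega⟩, ?_⟩)
  have hsplit := partialSum_add X m k (i - k) ω
  rw [Nat.add_sub_cancel' (by omega)] at hsplit
  have := abs_add_le (partialSum X m k ω) (partialSum X (m + k) (i - k) ω)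
  rw [← hsplit] at this
  linarith [not_lt.mp hu]

lemma exp_neg_div_le_exp_neg_div {x y d₁ d₂ : ℝ} (hx : 0 ≤ x) (hxy : x ≤ y) (hd₁ : 0 < d₁)
    (hd : d₁ ≤ d₂) : exp (-y / d₁) ≤ exp (-x / d₂) := by
  rw [exp_le_exp, neg_div, neg_div, neg_le_neg_iff]
  exact div_le_div₀ (hx.trans hxy) hxy hd₁ hd

lemma mul_exp_neg_le_exp_neg {n φ a c : ℝ} (hn : 0 < n) (h : log n ≤ (a - c) * φ) :
    n * exp (-(a * φ)) ≤ exp (-(c * φ)) :=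
  calc n * exp (-(a * φ)) ≤ exp ((a - c) * φ) * exp (-(a * φ)) := by
        gcongr
        rwa [← exp_log hn, exp_le_exp]
    _ = exp (-(c * φ)) := by rw [← exp_add]; ring_nf

lemma exp_neg_mul_le_exp_neg_mul_div_four {c η L φ ψ : ℝ} (hc : 0 ≤ c) (hη : 0 ≤ η)
    (hL : log 4 ≤ c * η * L) (hLφ : L ≤ φ) (hψ : (1 + η) * φ ≤ ψ) :
    exp (-(c * ψ)) ≤ exp (-(c * φ)) / 4 :=
  calc exp (-(c * ψ)) ≤ exp (-(c * φ) - log 4) := by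
        have := mul_le_mul_of_nonneg_left hψ hc
        have := mul_le_mul_of_nonneg_left hLφ (mul_nonneg hc hη)
        gcongr
        linarith
    _ = exp (-(c * φ)) / 4 := by rw [exp_sub, exp_log four_pos]

lemma one_add_mul_sq_div_le {η n g d r t : ℝ} (hη : 0 ≤ η) (hn : 0 < n) (hg : 0 ≤ g)
    (hd : 0 < d) (hdn : d ≤ r ^ 2 * (1 - η) * n) :
    (1 + η) * (t ^ 2 / (n + g)) ≤ (r * t) ^ 2 / d := by
  rw [mul_div_assoc', div_le_div_iff₀ (by positivity) hd, mul_pow]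
  have h₁ : (1 + η) * d ≤ r ^ 2 * (n + g) := by
    nlinarith [mul_le_mul_of_nonneg_left hdn (by linarith : (0:ℝ) ≤ 1 + η), sq_nonneg r,
      mul_nonneg (sq_nonneg r) (mul_nonneg (sq_nonneg η) hn.le), mul_nonneg (sq_nonneg r) hg]
  nlinarith [mul_le_mul_of_nonneg_left h₁ (sq_nonneg t)]

lemma exp_neg_mul_sq_div_le_div_four {c η L n g d r t : ℝ} (hc : 0 ≤ c) (hη : 0 ≤ η)
    (hL : log 4 ≤ c * η * L) (hn : 0 < n) (hg : 0 ≤ g) (hLt : L ≤ t ^ 2 / (n + g)) (hd : 0 < d)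
    (hdn : d ≤ r ^ 2 * (1 - η) * n) :
    exp (-(c * (r * t) ^ 2) / d) ≤ exp (-(c * t ^ 2) / (n + g)) / 4 := by
  rw [neg_div, mul_div_assoc, neg_div, mul_div_assoc]
  exact exp_neg_mul_le_exp_neg_mul_div_four hc hη hL hLt (one_add_mul_sq_div_le hη hn hg hd hdn)

lemma log_le_mul_sq_div_of_mul_lt {n g t ρ K b : ℝ} (hρ : 0 < ρ) (hn : 0 < n) (hg : ρ * n < g)
    (ht : 1 ≤ log t) (hK : K ≤ t ^ 2 / (g * log t)) (hK₁ : 1 + ρ⁻¹ ≤ K)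
    (hK₂ : 2 * (1 + ρ⁻¹) ≤ b * K) :
    log n ≤ b * (t ^ 2 / (n + g)) := by
  have hg₀ : 0 < g := (mul_pos hρ hn).trans hg
  have hq : 0 < 1 + ρ⁻¹ := by positivity
  have hKg : K * (g * log t) ≤ t ^ 2 := (le_div_iff₀ (by positivity)).mp hK
  have hng : n + g ≤ (1 + ρ⁻¹) * g := by
    have : n < ρ⁻¹ * g := by rwa [inv_mul_eq_div, lt_div_iff₀ hρ, mul_comm]
    linarith
  have hb : 0 < b := pos_of_mul_pos_left (by linarith) (hq.le.trans hK₁)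
  have hnt : n ≤ t ^ 2 := by nlinarith [mul_le_mul_of_nonneg_right hK₁ hg₀.le]
  have hKt : K * log t / (1 + ρ⁻¹) ≤ t ^ 2 / (n + g) := by
    rw [div_le_div_iff₀ hq (by positivity)]
    have hKlog : 0 ≤ K * log t := mul_nonneg (hq.le.trans hK₁) (by linarith)
    nlinarith [mul_le_mul_of_nonneg_left hng hKlog]
  calc log n ≤ log (t ^ 2) := log_le_log hn hnt
    _ = 2 * log t := by rw [log_pow]; norm_num
    _ ≤ b * (K * log t / (1 + ρ⁻¹)) := by
        rw [← mul_div_assoc, le_div_iff₀ hq]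
        nlinarith
    _ ≤ b * (t ^ 2 / (n + g)) := by gcongr

lemma le_mul_of_mul_sq_div_lt_log {n G ρ K b L t : ℝ} (hρ : 0 < ρ) (hn : 1 ≤ n) (hG : 0 ≤ G)
    (ht : 0 < t) (hK : ρ * n < G → K ≤ t ^ 2 / (G * log t)) (hK₁ : 1 + ρ⁻¹ ≤ K)
    (hK₂ : 2 * (1 + ρ⁻¹) ≤ b * K) (hL : exp 1 ^ 2 ≤ L) (hLt : L < t ^ 2 / (n + G))
    (hlog : b * (t ^ 2 / (n + G)) < log n) :
    G ≤ ρ * n := by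
  by_contra! hρG
  have hlogt : 1 ≤ log t := by
    have : t ^ 2 / (n + G) ≤ t ^ 2 := div_le_self (sq_nonneg t) (by linarith)
    exact (le_log_iff_exp_le ht).mpr (by nlinarith [exp_pos 1])
  exact hlog.not_ge (log_le_mul_sq_div_of_mul_lt hρ (by linarith) hρG hlogt (hK hρG) hK₁ hK₂)

lemma exists_add_eq_of_one_le_mul {n : ℕ} {ε : ℝ} (hε : ε < 1) (hn : 1 ≤ ε * n) :
    ∃ k j : ℕ, k + j = n ∧ 1 ≤ k ∧ 1 ≤ j ∧ (j : ℝ) ≤ ε * n ∧ ε * n ≤ j + 1 := by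
  have hn₀ : (0 : ℝ) < n := by
    by_contra! h
    nlinarith [Nat.cast_nonneg (α := ℝ) n]
  have hj := Nat.floor_le (by linarith : (0:ℝ) ≤ ε * n)
  have hjn : (⌊ε * n⌋₊ : ℝ) < n := by nlinarith
  refine ⟨n - ⌊ε * n⌋₊, ⌊ε * n⌋₊, Nat.sub_add_cancel (by exact_mod_cast hjn.le), ?_,
    Nat.one_le_floor_iff _ |>.mpr hn, hj, (Nat.lt_floor_add_one _).le⟩
  have : ⌊ε * n⌋₊ < n := by exact_mod_cast hjn
  omega

lemma exists_le_mul_one_sub_sq {a c : ℝ} (ha : 0 < a) (hc : 0 ≤ c) (hca : c < a) :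
    ∃ δ, 0 < δ ∧ δ < 1 ∧ c ≤ a * (1 - δ) ^ 2 := by
  -- `(1 - δ)² ≥ 1 - 2δ`
  refine ⟨(a - c) / (2 * a), div_pos (by linarith) (by linarith), ?_, ?_⟩
  · rw [div_lt_one (by linarith)]; linarith
  · have : a * (1 - 2 * ((a - c) / (2 * a))) = c := by field_simp; ring
    nlinarith [sq_nonneg ((a - c) / (2 * a))]

lemma cast_add_apply_pos {g : ℕ → ℝ → ℝ}
    (hg_nonneg : ∀ n : ℕ, 1 ≤ n → ∀ t : ℝ, 0 < t → 0 ≤ g n t) {n : ℕ} (hn : 1 ≤ n) {t : ℝ}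
    (ht : 0 < t) : (0 : ℝ) < n + g n t := by
  have : (1 : ℝ) ≤ n := by exact_mod_cast hn
  linarith [hg_nonneg n hn t ht]

lemma apply_le_apply_of_le {g : ℕ → ℝ → ℝ}
    (hg_mono : ∀ n : ℕ, 1 ≤ n → ∀ s t : ℝ, 0 < s → s ≤ t → g n s ≤ g n t)
    (hg_incr : ∀ n : ℕ, 1 ≤ n → ∀ t : ℝ, 0 < t → g n t ≤ g (n + 1) t)
    {j n : ℕ} (hj : 1 ≤ j) (hjn : j ≤ n) {s t : ℝ} (hs : 0 < s) (hst : s ≤ t) :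
    g j s ≤ g n t := by
  refine (hg_mono j hj s t hs hst).trans ?_
  induction n, hjn using Nat.le_induction with
  | base => exact le_rfl
  | succ n hn ih => exact ih.trans (hg_incr n (hj.trans hn) t (hs.trans_le hst))

lemma cast_add_apply_le_cast_add_apply {g : ℕ → ℝ → ℝ}
    (hg_mono : ∀ n : ℕ, 1 ≤ n → ∀ s t : ℝ, 0 < s → s ≤ t → g n s ≤ g n t)
    (hg_incr : ∀ n : ℕ, 1 ≤ n → ∀ t : ℝ, 0 < t → g n t ≤ g (n + 1) t)
    {j n : ℕ} (hj : 1 ≤ j) (hjn : j ≤ n) {s t : ℝ} (hs : 0 < s) (hst : s ≤ t) :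
    (j : ℝ) + g j s ≤ n + g n t :=
  add_le_add (by exact_mod_cast hjn) (apply_le_apply_of_le hg_mono hg_incr hj hjn hs hst)

variable [MeasurableSpace Ω]

lemma measureReal_lt_maxAbsPartialSum_le_sum (P : Measure Ω) [IsFiniteMeasure P]
    (X : ℕ → Ω → ℝ) (m n : ℕ) (hn : 1 ≤ n) (t : ℝ) :
    P.real {ω | t < maxAbsPartialSum X m n hn ω} ≤
      ∑ j ∈ Finset.Icc 1 n, P.real {ω | t < |partialSum X m j ω|} := by
  refine (measureReal_mono (fun ω hω => ?_) (measure_ne_top _ _)).trans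
    (measureReal_biUnion_finset_le _ _)
  obtain ⟨j, hj, hjt⟩ := lt_maxAbsPartialSum_iff.mp hω
  exact Set.mem_biUnion hj hjt

lemma measureReal_lt_maxAbsPartialSum_le_mul (P : Measure Ω) [IsFiniteMeasure P]
    (X : ℕ → Ω → ℝ) {A a : ℝ} {g : ℕ → ℝ → ℝ} (hA : 0 ≤ A) (ha : 0 ≤ a)
    (hg_nonneg : ∀ n : ℕ, 1 ≤ n → ∀ t : ℝ, 0 < t → 0 ≤ g n t)
    (hg_mono : ∀ n : ℕ, 1 ≤ n → ∀ s t : ℝ, 0 < s → s ≤ t → g n s ≤ g n t)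
    (hg_incr : ∀ n : ℕ, 1 ≤ n → ∀ t : ℝ, 0 < t → g n t ≤ g (n + 1) t)
    (hS : ∀ m n : ℕ, 1 ≤ n → ∀ t : ℝ, 0 ≤ t →
      P.real {ω | t < |partialSum X m n ω|} ≤ A * exp (-(a * t ^ 2) / (n + g n t)))
    (m n : ℕ) (hn : 1 ≤ n) {t : ℝ} (ht : 0 < t) :
    P.real {ω | t < maxAbsPartialSum X m n hn ω} ≤
      n * (A * exp (-(a * t ^ 2) / (n + g n t))) := by
  calc P.real {ω | t < maxAbsPartialSum X m n hn ω}
      ≤ ∑ j ∈ Finset.Icc 1 n, P.real {ω | t < |partialSum X m j ω|} :=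
        measureReal_lt_maxAbsPartialSum_le_sum P X m n hn t
    _ ≤ ∑ j ∈ Finset.Icc 1 n, A * exp (-(a * t ^ 2) / (n + g n t)) :=
        Finset.sum_le_sum fun j hj => ?_
    _ = n * (A * exp (-(a * t ^ 2) / (n + g n t))) := by simp
  rw [Finset.mem_Icc] at hj
  refine (hS m j hj.1 t ht.le).trans ?_
  exact mul_le_mul_of_nonneg_left (exp_neg_div_le_exp_neg_div (by positivity) le_rfl
    (cast_add_apply_pos hg_nonneg hj.1 ht)
    (cast_add_apply_le_cast_add_apply hg_mono hg_incr hj.1 hj.2 ht le_rfl)) hA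

lemma measureReal_lt_maxAbsPartialSum_le_add (P : Measure Ω) [IsFiniteMeasure P]
    (X : ℕ → Ω → ℝ) (m : ℕ) {k j n : ℕ} (hk : 1 ≤ k) (hj : 1 ≤ j) (hkjn : k + j = n)
    (hn : 1 ≤ n) {t u v : ℝ} (huv : u + v ≤ t) :
    P.real {ω | t < maxAbsPartialSum X m n hn ω} ≤
      P.real {ω | t < maxAbsPartialSum X m k hk ω} + P.real {ω | u < |partialSum X m k ω|} +
        P.real {ω | v < maxAbsPartialSum X (m + k) j hj ω} :=
  (measureReal_mono (setOf_lt_maxAbsPartialSum_subset X m hk hj hkjn hn huv)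
    (measure_ne_top _ _)).trans <|
    (measureReal_union_le _ _).trans (by gcongr; exact measureReal_union_le _ _)

lemma measureReal_lt_maxAbsPartialSum_le_of_bisection (P : Measure Ω) [IsFiniteMeasure P]
    (X : ℕ → Ω → ℝ) {A a c δ L D : ℝ} {g : ℕ → ℝ → ℝ}
    (hg_nonneg : ∀ n : ℕ, 1 ≤ n → ∀ t : ℝ, 0 < t → 0 ≤ g n t)
    (hg_mono : ∀ n : ℕ, 1 ≤ n → ∀ s t : ℝ, 0 < s → s ≤ t → g n s ≤ g n t)
    (hg_incr : ∀ n : ℕ, 1 ≤ n → ∀ t : ℝ, 0 < t → g n t ≤ g (n + 1) t)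
    (hS : ∀ m n : ℕ, 1 ≤ n → ∀ t : ℝ, 0 ≤ t →
      P.real {ω | t < |partialSum X m n ω|} ≤ A * exp (-(a * t ^ 2) / (n + g n t)))
    (hA : 0 ≤ A) (hc : 0 ≤ c) (hδ₀ : 0 < δ) (hδ₁ : δ < 1) (hcδ : c ≤ a * (1 - δ) ^ 2)
    (hL : log 4 ≤ c * (δ ^ 2 / 4) * L) (hD : 2 * A ≤ D)
    {n : ℕ} (hn : 1 ≤ n) (hn₈ : 8 ≤ δ ^ 2 * n) {t : ℝ} (ht : 0 < t)
    (hgn : g n t ≤ δ ^ 2 / 8 * n) (hLt : L ≤ t ^ 2 / (n + g n t))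
    (ih : ∀ k < n, ∀ (m : ℕ) (hk : 1 ≤ k) (s : ℝ), 0 ≤ s →
      P.real {ω | s < maxAbsPartialSum X m k hk ω} ≤ D * exp (-(c * s ^ 2) / (k + g k s)))
    (m : ℕ) :
    P.real {ω | t < maxAbsPartialSum X m n hn ω} ≤ D * exp (-(c * t ^ 2) / (n + g n t)) := by
  obtain ⟨k, j, hkjn, hk, hj, hjn, hnj⟩ :=
    exists_add_eq_of_one_le_mul (n := n) (ε := δ ^ 2 / 2) (by nlinarith) (by linarith)
  have hkjn' : (k : ℝ) + j = n := by exact_mod_cast hkjn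
  have hδt : 0 < δ * t := mul_pos hδ₀ ht
  have hδt' : 0 < (1 - δ) * t := mul_pos (by linarith) ht
  have hgk := apply_le_apply_of_le hg_mono hg_incr hk (by omega : k ≤ n) ht le_rfl
  have hgj := apply_le_apply_of_le hg_mono hg_incr hj (by omega : j ≤ n) hδt
    (by nlinarith : δ * t ≤ t)
  have hd₁ : (k : ℝ) + g k t ≤ 1 ^ 2 * (1 - δ ^ 2 / 4) * n := by linarith
  have hd₃ : (j : ℝ) + g j (δ * t) ≤ δ ^ 2 * (1 - δ ^ 2 / 4) * n := by
    nlinarith [mul_le_mul_of_nonneg_right (by nlinarith : δ ^ 2 ≤ 3 / 2)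
      (by positivity : 0 ≤ δ ^ 2 * n)]
  have hd₂ := cast_add_apply_le_cast_add_apply hg_mono hg_incr hk (by omega : k ≤ n) hδt'
    (by nlinarith : (1 - δ) * t ≤ t)
  set E := exp (-(c * t ^ 2) / (n + g n t))
  have h₁ : exp (-(c * t ^ 2) / (k + g k t)) ≤ E / 4 := by
    simpa using exp_neg_mul_sq_div_le_div_four hc (by positivity) hL (by positivity)
      (hg_nonneg n hn t ht) hLt (cast_add_apply_pos hg_nonneg hk ht) hd₁
  have h₃ : exp (-(c * (δ * t) ^ 2) / (j + g j (δ * t))) ≤ E / 4 :=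
    exp_neg_mul_sq_div_le_div_four hc (by positivity) hL (by positivity)
      (hg_nonneg n hn t ht) hLt (cast_add_apply_pos hg_nonneg hj hδt) hd₃
  have h₂ : exp (-(a * ((1 - δ) * t) ^ 2) / (k + g k ((1 - δ) * t))) ≤ E :=
    exp_neg_div_le_exp_neg_div (by positivity) (by nlinarith)
      (cast_add_apply_pos hg_nonneg hk hδt') hd₂
  have hE : 0 < E := exp_pos _
  calc P.real {ω | t < maxAbsPartialSum X m n hn ω}
      ≤ P.real {ω | t < maxAbsPartialSum X m k hk ω} +
          P.real {ω | (1 - δ) * t < |partialSum X m k ω|} +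
          P.real {ω | δ * t < maxAbsPartialSum X (m + k) j hj ω} :=
        measureReal_lt_maxAbsPartialSum_le_add P X m hk hj hkjn hn (by linarith)
    _ ≤ D * (E / 4) + A * E + D * (E / 4) := by
        gcongr
        · exact (ih k (by omega) m hk t ht.le).trans (by gcongr; linarith)
        · exact (hS m k hk _ hδt'.le).trans (by gcongr)
        · exact (ih j (by omega) (m + k) hj _ hδt.le).trans (by gcongr; linarith)
    _ ≤ D * E := by nlinarith

lemma measureReal_lt_maxAbsPartialSum_le (P : Measure Ω) [IsProbabilityMeasure P]
    (X : ℕ → Ω → ℝ) {A a c δ K L D : ℝ} {N : ℕ} {g : ℕ → ℝ → ℝ}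
    (hg_nonneg : ∀ n : ℕ, 1 ≤ n → ∀ t : ℝ, 0 < t → 0 ≤ g n t)
    (hg_mono : ∀ n : ℕ, 1 ≤ n → ∀ s t : ℝ, 0 < s → s ≤ t → g n s ≤ g n t)
    (hg_incr : ∀ n : ℕ, 1 ≤ n → ∀ t : ℝ, 0 < t → g n t ≤ g (n + 1) t)
    (hS : ∀ m n : ℕ, 1 ≤ n → ∀ t : ℝ, 0 ≤ t →
      P.real {ω | t < |partialSum X m n ω|} ≤ A * exp (-(a * t ^ 2) / (n + g n t)))
    (hA : 0 ≤ A) (hc : 0 ≤ c) (hca : c ≤ a) (hδ₀ : 0 < δ) (hδ₁ : δ < 1)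
    (hcδ : c ≤ a * (1 - δ) ^ 2)
    (hN : ∀ n : ℕ, N ≤ n → ∀ t : ℝ, 0 < t → δ ^ 2 / 8 * n < g n t →
      K ≤ t ^ 2 / (g n t * log t))
    (hK₁ : 1 + (δ ^ 2 / 8)⁻¹ ≤ K) (hK₂ : 2 * (1 + (δ ^ 2 / 8)⁻¹) ≤ (a - c) * K)
    (hN₈ : 8 ≤ δ ^ 2 * N) (hLe : exp 1 ^ 2 ≤ L) (hL : log 4 ≤ c * (δ ^ 2 / 4) * L)
    (hD : (2 + N) * A + exp (c * L) ≤ D) (n m : ℕ) (hn : 1 ≤ n) {t : ℝ} (ht : 0 ≤ t) :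
    P.real {ω | t < maxAbsPartialSum X m n hn ω} ≤ D * exp (-(c * t ^ 2) / (n + g n t)) := by
  induction n using Nat.strong_induction_on generalizing m t with
  | _ n ih =>
  have hNA : 0 ≤ (N : ℝ) * A := by positivity
  have hexp := exp_pos (c * L)
  have hAD : 2 * A ≤ D := by nlinarith
  have hNAD : N * A ≤ D := by nlinarith
  have hLD : exp (c * L) ≤ D := by nlinarith
  have hn₁ : (1 : ℝ) ≤ n := by exact_mod_cast hn
  set φ := t ^ 2 / (n + g n t)
  have hφ : ∀ b, -(b * t ^ 2) / (n + g n t) = -(b * φ) := fun b => by rw [neg_div, mul_div_assoc]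
  by_cases hφL : φ ≤ L
  · rw [hφ]
    calc P.real {ω | t < maxAbsPartialSum X m n hn ω} ≤ 1 := measureReal_le_one
      _ = exp (c * L) * exp (-(c * L)) := by rw [← exp_add]; simp
      _ ≤ D * exp (-(c * φ)) := by gcongr; linarith
  push Not at hφL
  have hL₀ : 0 < L := (by positivity : (0 : ℝ) < exp 1 ^ 2).trans_le hLe
  have hφ₀ : 0 ≤ φ := hL₀.le.trans hφL.le
  have ht₀ : 0 < t := ht.lt_of_ne (by rintro rfl; simp [φ] at hφL; linarith)
  have hunion := measureReal_lt_maxAbsPartialSum_le_mul P X hA (hca.trans' hc) hg_nonneg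
    hg_mono hg_incr hS m n hn ht₀
  rw [hφ] at hunion ⊢
  by_cases hlog : log n ≤ (a - c) * φ
  · calc P.real {ω | t < maxAbsPartialSum X m n hn ω}
        ≤ A * (n * exp (-(a * φ))) := hunion.trans_eq (by ring)
      _ ≤ A * exp (-(c * φ)) := by gcongr; exact mul_exp_neg_le_exp_neg (by positivity) hlog
      _ ≤ D * exp (-(c * φ)) := by gcongr; linarith
  by_cases hnN : n < N
  · calc P.real {ω | t < maxAbsPartialSum X m n hn ω}
        ≤ N * (A * exp (-(c * φ))) := hunion.trans (by gcongr)
      _ ≤ D * exp (-(c * φ)) := by rw [← mul_assoc]; gcongr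
  push Not at hlog hnN
  have hn₈ : 8 ≤ δ ^ 2 * n := hN₈.trans (by gcongr)
  have hgn : g n t ≤ δ ^ 2 / 8 * n := le_mul_of_mul_sq_div_lt_log (by positivity) hn₁
    (hg_nonneg n hn t ht₀) ht₀ (hN n hnN t ht₀) hK₁ hK₂ hLe hφL hlog
  rw [← hφ]
  exact measureReal_lt_maxAbsPartialSum_le_of_bisection P X hg_nonneg hg_mono hg_incr hS hA hc
    hδ₀ hδ₁ hcδ hL (by linarith) hn hn₈ ht₀ hgn hφL.le
    (fun k hk m hk₁ s hs => ih k hk m hk₁ hs) m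

end MaximalBernstein

open MaximalBernstein

/-- General maximal Bernstein-type inequality: assume `g n` is a sequence of
non-decreasing non-negative functions on `(0,∞)`, non-decreasing in `n`,
such that for every `0 < ρ < 1`,
`lim_{n→∞} inf{ t²/(g n t · log t) : t > 0, g n t > ρ n } = ∞`
(the infimum of the empty set being `∞`, the limit condition is expressed as:
for every bound `K` there is `N` such that for `n ≥ N` every element of the set
is `≥ K`), and that
`P{|S(m+1,m+n)| > t} ≤ A exp{-a t² / (n + g n t)}`.
Then for every `0 < c < a` there is `C > 0` such that
`P{M(m+1,m+n) > t} ≤ C exp{-c t² / (n + g n t)}`. -/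
theorem maximal_bernstein_inequality_general
    {Ω : Type*} [MeasurableSpace Ω] (P : Measure Ω) [IsProbabilityMeasure P]
    (X : ℕ → Ω → ℝ) (A a : ℝ) (g : ℕ → ℝ → ℝ)
    (hA : 0 < A) (ha : 0 < a)
    (hg_nonneg : ∀ n : ℕ, 1 ≤ n → ∀ t : ℝ, 0 < t → 0 ≤ g n t)
    (hg_mono : ∀ n : ℕ, 1 ≤ n → ∀ s t : ℝ, 0 < s → s ≤ t → g n s ≤ g n t)
    (hg_incr : ∀ n : ℕ, 1 ≤ n → ∀ t : ℝ, 0 < t → g n t ≤ g (n + 1) t)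
    (hg_lim : ∀ ρ : ℝ, 0 < ρ → ρ < 1 → ∀ K : ℝ, ∃ N : ℕ, ∀ n : ℕ, N ≤ n →
      ∀ t : ℝ, 0 < t → ρ * n < g n t → K ≤ t ^ 2 / (g n t * Real.log t))
    (hS : ∀ m n : ℕ, 1 ≤ n → ∀ t : ℝ, 0 ≤ t →
      (P {ω | t < |∑ i ∈ Finset.Icc (m + 1) (m + n), X i ω|}).toReal ≤
        A * Real.exp (-(a * t ^ 2) / (n + g n t))) :
    ∀ c : ℝ, 0 < c → c < a →
      ∃ C : ℝ, 0 < C ∧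
        ∀ m n : ℕ, ∀ hn : 1 ≤ n, ∀ t : ℝ, 0 ≤ t →
          (P {ω | t < (Finset.Icc 1 n).sup' (Finset.nonempty_Icc.mpr hn)
              (fun j => |∑ i ∈ Finset.Icc (m + 1) (m + j), X i ω|)}).toReal ≤
            C * Real.exp (-(c * t ^ 2) / (n + g n t)) := by
  intro c hc hca
  obtain ⟨δ, hδ₀, hδ₁, hcδ⟩ := exists_le_mul_one_sub_sq ha hc.le hca
  set ρ := δ ^ 2 / 8
  set K := (1 + ρ⁻¹) * (1 + 2 / (a - c))
  obtain ⟨N₁, hN₁⟩ := hg_lim ρ (by positivity) (show δ ^ 2 / 8 < 1 by nlinarith) K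
  set N := max N₁ ⌈8 / δ ^ 2⌉₊
  set L := max (exp 1 ^ 2) (log 4 / (c * (δ ^ 2 / 4)))
  have hK₁ : 1 + ρ⁻¹ ≤ K := le_mul_of_one_le_right (by positivity)
    (le_add_of_nonneg_right (div_nonneg zero_le_two (by linarith)))
  have hK₂ : 2 * (1 + ρ⁻¹) ≤ (a - c) * K := by
    have : (a - c) * (1 + 2 / (a - c)) = a - c + 2 := by
      field_simp [(sub_pos.mpr hca).ne']
    nlinarith [inv_pos.mpr (by positivity : 0 < ρ)]
  have hN₈ : 8 ≤ δ ^ 2 * N := (div_le_iff₀' (by positivity)).mp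
    ((Nat.le_ceil _).trans (by exact_mod_cast le_max_right _ _))
  have hL : log 4 ≤ c * (δ ^ 2 / 4) * L := (div_le_iff₀' (by positivity)).mp (le_max_right _ _)
  refine ⟨(2 + N) * A + exp (c * L), by positivity, fun m n hn t ht => ?_⟩
  exact measureReal_lt_maxAbsPartialSum_le P X hg_nonneg hg_mono hg_incr hS hA.le hc.le hca.le
    hδ₀ hδ₁ hcδ (fun n hn => hN₁ n (le_of_max_le_left hn)) hK₁ hK₂ hN₈ (le_max_left _ _) hL
    le_rfl n m hn ht
end

section
/- Let M > 0 and v > 0, and for each integer n ≥ 1 define g_n(t) = M²/v² + (tM/v²)·(log n)² for t > 0. Then the sequence {g_n} satisfies: each g_n is non-decreasing and non-negative, g_n(t) ≤ g_{n+1}(t) for all t > 0 and n ≥ 1, and for every 0 < ρ < 1, lim_{n→∞} inf{ t²/(g_n(t)·log t) : t > 0, g_n(t) > ρ n } = ∞, where the infimum of the empty set is defined to be ∞. -/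
/-!
Write `a = M²/v²`, `b = M/v²` and `L = log n`, so that `g n t = a + t·bL²`. Since
`log t ≤ 2√t` and `a + t·bL² ≤ t(a + bL²)` for `t ≥ 1`, the ratio `t² / (g n t · log t)` is
at least `√t / (2(a + bL²))`. On the other hand `g n t > ρn` forces `t > (ρn - a) / (bL²)`,
which grows like `n / (log n)²`; hence the ratio is at least of order `√n / (log n)³`,
uniformly in such `t`.
-/

open Real Filter

lemma log_le_two_mul_sqrt {t : ℝ} (ht : 0 ≤ t) : log t ≤ 2 * √t := by
  have h := log_le_rpow_div ht (by norm_num : (0 : ℝ) < 1 / 2)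
  rwa [← sqrt_eq_rpow, div_div_eq_mul_div, div_one, mul_comm] at h

lemma sqrt_div_le_sq_div_mul_log {a c t : ℝ} (ha : 0 ≤ a) (hc : 0 < c) (ht : 1 < t) :
    √t / (2 * (a + c)) ≤ t ^ 2 / ((a + t * c) * log t) := by
  have ht0 : 0 < t := by linarith
  have hg : a + t * c ≤ t * (a + c) := by nlinarith
  calc √t / (2 * (a + c)) = t ^ 2 / (t * (a + c) * (2 * √t)) := by
        have hs : √t ^ 2 = t := sq_sqrt ht0.le
        field_simp
        rw [hs]
    _ ≤ t ^ 2 / ((a + t * c) * log t) :=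
        div_le_div_of_nonneg_left (by positivity) (mul_pos (by positivity) (log_pos ht))
          (mul_le_mul hg (log_le_two_mul_sqrt ht0.le) (log_pos ht).le (by positivity))

/-- `a + t·c > ratioThreshold K a c` forces `t > 1 + 4K²(a + c)²`, i.e. both `t > 1` and
`2K(a + c) < √t`. -/
def ratioThreshold (K a c : ℝ) : ℝ := a + c * (1 + 4 * K ^ 2 * (a + c) ^ 2)

lemma le_sq_div_mul_log_of_ratioThreshold_le {K a c x t : ℝ} (ha : 0 ≤ a) (hc : 0 ≤ c)
    (hx : ratioThreshold K a c ≤ x) (ht : x < a + t * c) :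
    K ≤ t ^ 2 / ((a + t * c) * log t) := by
  have hct : c * (1 + 4 * K ^ 2 * (a + c) ^ 2) < c * t := by
    unfold ratioThreshold at hx
    linarith
  have hc' : 0 < c := by
    rcases hc.eq_or_lt with rfl | hc'
    · simp at hct
    · exact hc'
  have hT : 1 + 4 * K ^ 2 * (a + c) ^ 2 < t := lt_of_mul_lt_mul_left hct hc
  have hK : 2 * K * (a + c) ≤ √t :=
    (le_abs_self _).trans (abs_le_sqrt (by nlinarith))
  calc K ≤ √t / (2 * (a + c)) := by
        rw [le_div_iff₀ (by positivity)]
        linarith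
    _ ≤ t ^ 2 / ((a + t * c) * log t) :=
        sqrt_div_le_sq_div_mul_log ha hc' (by nlinarith [sq_nonneg (K * (a + c))])

lemma ratioThreshold_mul_le {K a c l : ℝ} (ha : 0 ≤ a) (hc : 0 ≤ c) (hl : 1 ≤ l) :
    ratioThreshold K a (l * c) ≤ l ^ 3 * ratioThreshold K a c := by
  have hac : a + l * c ≤ l * (a + c) := by nlinarith
  have hsq : (a + l * c) ^ 2 ≤ l ^ 2 * (a + c) ^ 2 := by
    rw [← mul_pow]
    exact pow_le_pow_left₀ (by positivity) hac 2
  have hl3 : 1 ≤ l ^ 3 := one_le_pow₀ hl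
  unfold ratioThreshold
  nlinarith [mul_le_mul_of_nonneg_left hsq (by positivity : 0 ≤ 4 * K ^ 2 * c * l),
    mul_nonneg (by positivity : 0 ≤ c * l) (sq_nonneg (l - 1)),
    mul_nonneg ha (by linarith : 0 ≤ l ^ 3 - 1)]

lemma eventually_mul_log_pow_le (C : ℝ) (k : ℕ) {ρ : ℝ} (hρ : 0 < ρ) :
    ∀ᶠ n : ℕ in atTop, C * log n ^ k ≤ ρ * n := by
  have h := ((isLittleO_pow_log_id_atTop (n := k)).const_mul_left C).bound hρ
  filter_upwards [tendsto_natCast_atTop_atTop.eventually h] with n hn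
  simpa using (le_abs_self _).trans hn

theorem mpr_g_satisfies_hypotheses_general
    (M v : ℝ) (hM : 0 < M) :
    (∀ n : ℕ, 1 ≤ n → ∀ t : ℝ, 0 < t →
      0 ≤ M ^ 2 / v ^ 2 + t * M / v ^ 2 * (Real.log n) ^ 2) ∧
    (∀ n : ℕ, 1 ≤ n → ∀ s t : ℝ, 0 < s → s ≤ t →
      M ^ 2 / v ^ 2 + s * M / v ^ 2 * (Real.log n) ^ 2 ≤
        M ^ 2 / v ^ 2 + t * M / v ^ 2 * (Real.log n) ^ 2) ∧
    (∀ n : ℕ, 1 ≤ n → ∀ t : ℝ, 0 < t →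
      M ^ 2 / v ^ 2 + t * M / v ^ 2 * (Real.log n) ^ 2 ≤
        M ^ 2 / v ^ 2 + t * M / v ^ 2 * (Real.log (n + 1)) ^ 2) ∧
    (∀ ρ : ℝ, 0 < ρ → ρ < 1 → ∀ K : ℝ, ∃ N : ℕ, ∀ n : ℕ, N ≤ n →
      ∀ t : ℝ, 0 < t →
        ρ * n < M ^ 2 / v ^ 2 + t * M / v ^ 2 * (Real.log n) ^ 2 →
        K ≤ t ^ 2 / ((M ^ 2 / v ^ 2 + t * M / v ^ 2 * (Real.log n) ^ 2) * Real.log t)) := by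
  refine ⟨fun n _ t ht => by positivity, fun n _ s t _ hst => by gcongr,
    fun n _ t ht => ?_, fun ρ hρ _ K => ?_⟩
  · have hlog : log n ≤ log (n + 1) := log_le_log (by positivity) (by linarith)
    gcongr
  · have ha : 0 ≤ M ^ 2 / v ^ 2 := by positivity
    have hb : 0 ≤ M / v ^ 2 := by positivity
    have hL : ∀ᶠ n : ℕ in atTop, 1 ≤ log n :=
      (tendsto_log_atTop.comp tendsto_natCast_atTop_atTop).eventually_ge_atTop 1
    obtain ⟨N, hN⟩ := eventually_atTop.mp
      (hL.and (eventually_mul_log_pow_le (ratioThreshold K (M ^ 2 / v ^ 2) (M / v ^ 2)) 6 hρ))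
    refine ⟨N, fun n hn t _ hgt => ?_⟩
    obtain ⟨hL1, hCL⟩ := hN n hn
    have hg : M ^ 2 / v ^ 2 + t * M / v ^ 2 * log n ^ 2
        = M ^ 2 / v ^ 2 + t * (log n ^ 2 * (M / v ^ 2)) := by ring
    rw [hg] at hgt ⊢
    refine le_sq_div_mul_log_of_ratioThreshold_le ha (by positivity) ?_ hgt
    calc ratioThreshold K _ (log n ^ 2 * (M / v ^ 2))
        ≤ (log n ^ 2) ^ 3 * ratioThreshold K (M ^ 2 / v ^ 2) (M / v ^ 2) :=
          ratioThreshold_mul_le ha hb (one_le_pow₀ hL1)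
      _ ≤ ρ * n := by rw [← pow_mul, mul_comm]; exact hCL

/-- The choice `g n t = M²/v² + (t M / v²)(log n)²` (arising from the
Merlevède–Peligrad–Rio inequality) satisfies the hypotheses of the general
maximal Bernstein-type inequality: each `g n` (for `n ≥ 1`) is non-negative
and non-decreasing on `(0,∞)`, `g n t ≤ g (n+1) t`, and for every `0 < ρ < 1`,
`lim_{n→∞} inf{ t²/(g n t · log t) : t > 0, g n t > ρ n } = ∞`
(the infimum of the empty set being `∞`, the limit condition is expressed as:
for every `K` there is `N` such that for all `n ≥ N` every element of the set
is `≥ K`). -/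
theorem mpr_g_satisfies_hypotheses
    (M v : ℝ) (hM : 0 < M) (hv : 0 < v) :
    (∀ n : ℕ, 1 ≤ n → ∀ t : ℝ, 0 < t →
      0 ≤ M ^ 2 / v ^ 2 + t * M / v ^ 2 * (Real.log n) ^ 2) ∧
    (∀ n : ℕ, 1 ≤ n → ∀ s t : ℝ, 0 < s → s ≤ t →
      M ^ 2 / v ^ 2 + s * M / v ^ 2 * (Real.log n) ^ 2 ≤
        M ^ 2 / v ^ 2 + t * M / v ^ 2 * (Real.log n) ^ 2) ∧
    (∀ n : ℕ, 1 ≤ n → ∀ t : ℝ, 0 < t →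
      M ^ 2 / v ^ 2 + t * M / v ^ 2 * (Real.log n) ^ 2 ≤
        M ^ 2 / v ^ 2 + t * M / v ^ 2 * (Real.log (n + 1)) ^ 2) ∧
    (∀ ρ : ℝ, 0 < ρ → ρ < 1 → ∀ K : ℝ, ∃ N : ℕ, ∀ n : ℕ, N ≤ n →
      ∀ t : ℝ, 0 < t →
        ρ * n < M ^ 2 / v ^ 2 + t * M / v ^ 2 * (Real.log n) ^ 2 →
        K ≤ t ^ 2 / ((M ^ 2 / v ^ 2 + t * M / v ^ 2 * (Real.log n) ^ 2) * Real.log t)) :=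
  mpr_g_satisfies_hypotheses_general M v hM
end
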